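/- arXiv:2005.03407 — 2 statements merged into one kernel-verified Lean document; each statement's English description precedes it below -/
import Mathlib

section
/- For every integer k >= 0 and positive integer n, the Bernoulli polynomial satisfies B_k(n+1) = sum_{j=0}^{k} (-1)^{k-j} * j! * S2(k, j) * H_{j+1}^{(n)}, where H_{j+1}^{(n)} is a hyperharmonic number and S2 denotes Stirling numbers of the second kind. -/
/-- `hh r n` is the hyperharmonic number `H_n^{(r)}`. -/
def hh : ℕ → ℕ → ℚ
  | 0, n => if n = 0 then 0 else (n : ℚ)⁻¹
  | r + 1, n => ∑ k ∈ Finset.Icc 1 n, hh r k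

/-- `S2 n j` is the Stirling number of the second kind. -/
def S2 : ℕ → ℕ → ℕ
  | 0, 0 => 1
  | 0, _ + 1 => 0
  | _ + 1, 0 => 0
  | n + 1, j + 1 => (j + 1) * S2 n (j + 1) + S2 n j

open Polynomial Finset

noncomputable def ascPoly : ℕ → Polynomial ℚ
  | 0 => 1
  | m + 1 => ascPoly m * (X + C (m : ℚ))

lemma hh_zero_right (r : ℕ) : hh r 0 = 0 := by
  cases r <;> simp [hh]

lemma hh_succ_succ (r m : ℕ) : hh (r + 1) (m + 1) = hh (r + 1) m + hh r (m + 1) := by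
  show (∑ k ∈ Finset.Icc 1 (m+1), hh r k) = (∑ k ∈ Finset.Icc 1 m, hh r k) + hh r (m+1)
  rw [← Finset.sum_Icc_succ_top (by omega)]

lemma S2_eq_zero {k j : ℕ} (h : k < j) : S2 k j = 0 := by
  induction k generalizing j with
  | zero => obtain ⟨j, rfl⟩ := Nat.exists_eq_add_of_lt h; simp [S2]
  | succ k ih =>
    obtain ⟨j, rfl⟩ : ∃ i, j = i + 1 := ⟨j - 1, by omega⟩
    show (j + 1) * S2 k (j + 1) + S2 k j = 0
    rw [ih (by omega), ih (by omega)]; ring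

/-- master reindexing lemma -/
lemma master (k : ℕ) (u : ℕ → Polynomial ℚ) :
    ∑ j ∈ range (k + 2), ((-1 : ℚ) ^ (k + 1 - j) * (S2 (k + 1) j : ℚ)) • u j
      = ∑ i ∈ range (k + 1),
          ((-1 : ℚ) ^ (k - i) * (S2 k i : ℚ)) • (u (i + 1) - (i : ℚ) • u i) := by
  have hT : ∑ j ∈ range (k + 2), ((-1 : ℚ) ^ (k + 1 - j) * ((j : ℚ) * (S2 k j : ℚ))) • u j
      = ∑ j ∈ range (k + 1), -(((-1 : ℚ) ^ (k - j) * ((j : ℚ) * (S2 k j : ℚ))) • u j) := by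
    rw [Finset.sum_range_succ, S2_eq_zero (Nat.lt_succ_self k)]
    simp only [Nat.cast_zero, mul_zero, zero_smul, add_zero, smul_zero]
    refine Finset.sum_congr rfl fun j hj => ?_
    have hj' : k + 1 - j = (k - j) + 1 := by
      have := Finset.mem_range.mp hj; omega
    rw [hj', pow_succ, show (-1:ℚ)^(k-j) * -1 * ((j:ℚ) * (S2 k j:ℚ))
      = -((-1:ℚ)^(k-j) * ((j:ℚ) * (S2 k j:ℚ))) from by ring, neg_smul]
  have hT2 : ∑ i ∈ range (k+1), ((-1:ℚ)^(k-i) * (((i:ℚ)+1) * (S2 k (i+1) : ℚ))) • u (i+1)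
      = ∑ j ∈ range (k+2), ((-1:ℚ)^(k+1-j) * ((j:ℚ) * (S2 k j : ℚ))) • u j := by
    conv_rhs => rw [Finset.sum_range_succ']
    simp only [Nat.add_sub_add_right, Nat.cast_zero, zero_mul, mul_zero, zero_smul, add_zero]
    refine Finset.sum_congr rfl fun i _ => ?_
    congr 1
    push_cast
    ring
  have hS0 : (S2 (k+1) 0 : ℚ) = 0 := by norm_num [S2]
  rw [Finset.sum_range_succ']
  rw [hS0]
  simp only [mul_zero, zero_smul, add_zero, Nat.add_sub_add_right]
  have hsplit : ∀ i ∈ range (k+1),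
      ((-1:ℚ)^(k-i) * (S2 (k+1) (i+1) : ℚ)) • u (i+1)
        = ((-1:ℚ)^(k-i) * (S2 k i : ℚ)) • u (i+1)
          + ((-1:ℚ)^(k-i) * (((i:ℚ)+1) * (S2 k (i+1) : ℚ))) • u (i+1) := by
    intro i _
    rw [← add_smul]
    congr 1
    have h1 : S2 (k+1) (i+1) = (i+1) * S2 k (i+1) + S2 k i := rfl
    rw [h1]
    push_cast
    ring
  rw [Finset.sum_congr rfl hsplit, Finset.sum_add_distrib, hT2, hT, ← Finset.sum_add_distrib]
  refine Finset.sum_congr rfl fun i _ => ?_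
  rw [smul_sub, smul_smul,
    show (-1:ℚ)^(k-i) * ((i:ℚ) * (S2 k i:ℚ)) = ((-1:ℚ)^(k-i) * (S2 k i:ℚ)) * (i:ℚ) from by ring,
    ← sub_eq_add_neg]

lemma L1 (k : ℕ) :
    ∑ j ∈ range (k + 1), ((-1 : ℚ) ^ (k - j) * (S2 k j : ℚ)) • ascPoly j
      = (X : Polynomial ℚ) ^ k := by
  induction k with
  | zero => simp [ascPoly, S2]
  | succ k ih =>
    rw [master k ascPoly]
    have : ∀ i : ℕ, ascPoly (i + 1) - (i : ℚ) • ascPoly i = X * ascPoly i := by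
      intro i
      show ascPoly i * (X + C (i : ℚ)) - (i : ℚ) • ascPoly i = X * ascPoly i
      rw [smul_eq_C_mul]; ring
    have h2 : ∑ i ∈ range (k + 1), ((-1 : ℚ) ^ (k - i) * (S2 k i : ℚ)) • (X * ascPoly i)
        = X * ∑ i ∈ range (k + 1), ((-1 : ℚ) ^ (k - i) * (S2 k i : ℚ)) • ascPoly i := by
      rw [Finset.mul_sum]
      exact Finset.sum_congr rfl fun i _ => (mul_smul_comm _ _ _).symm
    simp_rw [this]
    rw [h2, ih, ← pow_succ']

lemma asc_comp_sub_one (m : ℕ) :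
    (ascPoly (m + 1)).comp (X - C 1) = (X - C 1) * ascPoly m := by
  induction m with
  | zero => simp [ascPoly]
  | succ m ih =>
    show (ascPoly (m+1) * (X + C ((m+1 : ℕ) : ℚ))).comp (X - C 1) = _
    rw [mul_comp, ih]
    show _ = (X - C 1) * (ascPoly m * (X + C (m : ℚ)))
    simp [mul_comp, add_comp]
    try push_cast
    try ring

lemma asc_left (m : ℕ) : ascPoly (m + 1) = X * (ascPoly m).comp (X + C 1) := by
  induction m with
  | zero => simp [ascPoly]
  | succ m ih =>
    have e1 : ascPoly (m+1+1) = ascPoly (m+1) * (X + C ((m+1 : ℕ) : ℚ)) := rfl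
    have e2 : ascPoly (m+1) = ascPoly m * (X + C ((m : ℕ) : ℚ)) := rfl
    conv_rhs => rw [e2, mul_comp]
    rw [e1, ih]
    simp only [add_comp, X_comp, C_comp]
    push_cast
    simp only [C_add, C_1]
    ring

lemma asc_comp_add_one (m : ℕ) :
    (ascPoly (m + 1)).comp (X + C 1) - ascPoly (m + 1)
      = C ((m : ℚ) + 1) * (ascPoly m).comp (X + C 1) := by
  induction m with
  | zero => simp [ascPoly]
  | succ m ih =>
    have hA : (ascPoly (m+1)).comp (X + C 1)
        = ascPoly (m+1) + C ((m:ℚ)+1) * (ascPoly m).comp (X + C 1) := by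
      rw [← ih]; ring
    have hdef : ascPoly (m+2) = ascPoly (m+1) * (X + C ((m:ℚ)+1)) := by
      show ascPoly (m+1) * (X + C (((m+1):ℕ):ℚ)) = _
      push_cast; ring
    rw [hdef, mul_comp, hA, asc_left m]
    simp only [add_comp, X_comp, C_comp]
    push_cast
    simp only [C_add, C_1]
    ring

lemma asc_eval_one (m : ℕ) : (ascPoly m).eval 1 = (m.factorial : ℚ) := by
  induction m with
  | zero => simp [ascPoly]
  | succ m ih =>
    simp [ascPoly, ih, Nat.factorial_succ]
    ring

/-- derivative of `asc_comp_sub_one`, evaluated -/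
lemma dasc_sub_one (m : ℕ) (x : ℚ) :
    ((ascPoly (m + 1)).derivative).eval (x - 1)
      = (ascPoly m).eval x + (x - 1) * ((ascPoly m).derivative).eval x := by
  have h := congrArg Polynomial.derivative (asc_comp_sub_one m)
  rw [derivative_comp, derivative_mul] at h
  have := congrArg (Polynomial.eval x) h
  simpa using this

lemma dasc_right (m : ℕ) (x : ℚ) :
    ((ascPoly (m + 1)).derivative).eval x
      = ((ascPoly m).derivative).eval x * (x + m) + (ascPoly m).eval x := by
  show ((ascPoly m * (X + C (m:ℚ))).derivative).eval x = _
  rw [derivative_mul]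
  simp only [derivative_X, derivative_C, eval_add, eval_mul, eval_X, eval_C, mul_one, add_zero,
    zero_add, mul_zero, derivative_add]
  try ring

lemma dasc_left (m : ℕ) (x : ℚ) :
    ((ascPoly (m + 1)).derivative).eval x
      = ((m : ℚ) + 1) * ((ascPoly m).derivative).eval x
        + ((ascPoly (m + 1)).derivative).eval (x - 1) := by
  rw [dasc_right, dasc_sub_one]; ring

lemma dasc_zero (m : ℕ) : ((ascPoly (m + 1)).derivative).eval 0 = (m.factorial : ℚ) := by
  have h := dasc_sub_one m 1
  norm_num [asc_eval_one] at h
  exact h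

lemma H3 (n : ℕ) : ∀ m : ℕ, (m.factorial : ℚ) * hh n m = ((ascPoly m).derivative).eval (n : ℚ) := by
  induction n with
  | zero =>
    intro m
    cases m with
    | zero => simp [hh, ascPoly]
    | succ m =>
      rw [Nat.cast_zero, dasc_zero]
      show ((m+1).factorial : ℚ) * (if (m+1 : ℕ) = 0 then 0 else (((m+1:ℕ)) : ℚ)⁻¹) = _
      rw [if_neg (Nat.succ_ne_zero m), Nat.factorial_succ]
      push_cast
      have : ((m:ℚ)+1) ≠ 0 := by positivity
      field_simp
  | succ n ihn =>
    intro m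
    induction m with
    | zero => simp [hh_zero_right, ascPoly]
    | succ m ihm =>
      rw [hh_succ_succ]
      have hx : ((n:ℚ) + 1) - 1 = (n:ℚ) := by ring
      have hl := dasc_left m ((n:ℚ)+1)
      have hcast : (((n+1:ℕ)):ℚ) = (n:ℚ) + 1 := by push_cast; ring
      rw [hcast] at ihm ⊢
      rw [hl, hx, ← ihn (m+1), ← ihm, Nat.factorial_succ]
      push_cast
      ring

noncomputable def Qp (k : ℕ) : Polynomial ℚ :=
  ∑ j ∈ range (k + 1), (((-1 : ℚ) ^ (k - j) * (S2 k j : ℚ)) * ((j : ℚ) + 1)⁻¹) • ascPoly (j + 1)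

lemma Qp_diff (k : ℕ) (x : ℚ) :
    (Qp k).eval (x + 1) - (Qp k).eval x = (x + 1) ^ k := by
  have hA4 : ∀ j : ℕ, (ascPoly (j+1)).eval (x+1) - (ascPoly (j+1)).eval x
      = ((j:ℚ)+1) * (ascPoly j).eval (x+1) := by
    intro j
    have h := congrArg (Polynomial.eval x) (asc_comp_add_one j)
    simpa [eval_comp] using h
  have hL1 := congrArg (Polynomial.eval (x+1)) (L1 k)
  simp only [eval_finset_sum, eval_smul, smul_eq_mul, eval_pow, eval_X] at hL1
  rw [Qp, eval_finset_sum, eval_finset_sum, ← Finset.sum_sub_distrib, ← hL1]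
  refine Finset.sum_congr rfl fun j hj => ?_
  simp only [eval_smul, smul_eq_mul]
  rw [← mul_sub, hA4 j]
  have hj0 : ((j:ℚ)+1) ≠ 0 := by positivity
  rw [show ((-1:ℚ)^(k-j) * (S2 k j : ℚ) * ((j:ℚ)+1)⁻¹) * (((j:ℚ)+1) * (ascPoly j).eval (x+1))
      = (((j:ℚ)+1)⁻¹ * ((j:ℚ)+1)) * ((-1:ℚ)^(k-j) * (S2 k j : ℚ) * (ascPoly j).eval (x+1))
      from by ring, inv_mul_cancel₀ hj0, one_mul]

lemma Qp_nat (k N : ℕ) :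
    (Qp k).eval (N : ℚ) = (Qp k).eval 0 + ∑ i ∈ range N, ((i:ℚ)+1)^k := by
  induction N with
  | zero => simp
  | succ N ih =>
    have h := Qp_diff k (N : ℚ)
    rw [Finset.sum_range_succ]
    push_cast
    linarith [h, ih]

lemma bern_eval (k N : ℕ) :
    (Polynomial.bernoulli (k+1)).eval ((N:ℚ)+1) - (Polynomial.bernoulli (k+1)).eval 1
      = ((k:ℚ)+1) * ∑ i ∈ range N, ((i:ℚ)+1)^k := by
  have h1 := Polynomial.bernoulli_succ_eval (N+1) k
  have h2 := Polynomial.bernoulli_succ_eval 1 k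
  rw [Finset.sum_range_succ'] at h1
  simp only [Finset.sum_range_one, Nat.cast_zero, Nat.cast_one] at h2
  push_cast at h1 h2 ⊢
  rw [h1, h2]
  ring

lemma Qp_eq (k : ℕ) :
    Qp k = C (((k:ℚ)+1)⁻¹) * (Polynomial.bernoulli (k+1)).comp (X + C 1)
      + C ((Qp k).eval 0 - ((k:ℚ)+1)⁻¹ * (Polynomial.bernoulli (k+1)).eval 1) := by
  apply Polynomial.eq_of_infinite_eval_eq
  apply Set.infinite_of_injective_forall_mem (f := (Nat.cast : ℕ → ℚ)) Nat.cast_injective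
  intro N
  simp only [Set.mem_setOf_eq, eval_add, eval_mul, eval_C, eval_comp, eval_X, eval_one]
  rw [Qp_nat k N]
  have hk : ((k:ℚ)+1) ≠ 0 := by positivity
  have h3 : ((k:ℚ)+1)⁻¹ * (((Polynomial.bernoulli (k+1)).eval ((N:ℚ)+1))
      - (Polynomial.bernoulli (k+1)).eval 1) = ∑ i ∈ range N, ((i:ℚ)+1)^k := by
    rw [bern_eval k N, inv_mul_cancel_left₀ hk]
  linarith [h3]

lemma dQp (k : ℕ) :
    Polynomial.derivative (Qp k) = (Polynomial.bernoulli k).comp (X + C 1) := by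
  rw [Qp_eq k, derivative_add, derivative_C, add_zero, derivative_C_mul, derivative_comp,
    Polynomial.derivative_bernoulli_add_one]
  have hk : ((k:ℚ)+1) ≠ 0 := by positivity
  simp only [mul_comp, natCast_comp, add_comp, one_comp, derivative_add, derivative_X,
    derivative_C, add_zero, mul_one]
  rw [one_mul, show ((k : Polynomial ℚ) + 1) = C ((k:ℚ)+1) from by
    rw [← C_eq_natCast, ← C_1, ← C_add]]
  rw [← mul_assoc, ← C_mul, inv_mul_cancel₀ hk, C_1, one_mul]

theorem bernoullyPoly_eq_hyperharmonic (k n : ℕ) (hn : 1 ≤ n) :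
    (Polynomial.bernoulli k).eval ((n : ℚ) + 1) =
      ∑ j ∈ Finset.range (k + 1),
        (-1 : ℚ) ^ (k - j) * (j.factorial : ℚ) * (S2 k j : ℚ) * hh n (j + 1) := by
  have h1 : (Polynomial.bernoulli k).eval ((n : ℚ) + 1)
      = ((Polynomial.derivative (Qp k))).eval (n : ℚ) := by
    rw [dQp k, eval_comp]
    simp
  rw [h1, Qp, derivative_sum]
  rw [eval_finset_sum]
  refine Finset.sum_congr rfl fun j hj => ?_
  rw [derivative_smul, eval_smul, smul_eq_mul, ← H3 n (j+1)]
  have hj0 : ((j:ℚ)+1) ≠ 0 := by positivity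
  have hfac : (((j+1).factorial : ℕ) : ℚ) = ((j:ℚ)+1) * (j.factorial : ℚ) := by
    rw [Nat.factorial_succ]; push_cast; ring
  rw [hfac, show ((-1:ℚ)^(k-j) * (S2 k j : ℚ) * ((j:ℚ)+1)⁻¹)
      * ((((j:ℚ)+1) * (j.factorial:ℚ)) * hh n (j+1))
      = (((j:ℚ)+1)⁻¹ * ((j:ℚ)+1))
        * ((-1:ℚ)^(k-j) * (j.factorial:ℚ) * (S2 k j:ℚ) * hh n (j+1)) from by ring,
    inv_mul_cancel₀ hj0, one_mul]
end

section
/- For any integers k >= 1 and n >= 0, the power sum S_k(n) = 1^k + ... + n^k satisfies S_k(n) = (1/(k+1)) * sum_{j=1}^{k+1} (-1)^j * j! * S2(k+1, j) * sum_{i=1}^{j} ((-1)^i/(j+1-i)) * C(n+1, i), where S2 denotes Stirling numbers of the second kind and C binomial coefficients. -/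
lemma S2_succ_zero (n : ℕ) : S2 (n + 1) 0 = 0 := rfl

lemma S2_eq_zero_s16 (n : ℕ) : ∀ j, n < j → S2 n j = 0 := by
  induction n with
  | zero =>
    intro j hj
    obtain ⟨j', rfl⟩ : ∃ j', j = j' + 1 := ⟨j - 1, by omega⟩
    rfl
  | succ n ih =>
    intro j hj
    obtain ⟨j', rfl⟩ : ∃ j', j = j' + 1 := ⟨j - 1, by omega⟩
    show (j' + 1) * S2 n (j' + 1) + S2 n j' = 0
    rw [ih _ (by omega), ih _ (by omega)]
    ring

lemma S2_self (n : ℕ) : S2 n n = 1 := by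
  induction n with
  | zero => rfl
  | succ n ih =>
    show (n + 1) * S2 n (n + 1) + S2 n n = 1
    rw [S2_eq_zero_s16 n _ (by omega), ih]
    ring

lemma mul_choose_eq (m j : ℕ) :
    m * m.choose j = (j + 1) * m.choose (j + 1) + j * m.choose j := by
  rcases le_or_gt j m with h | h
  · have h1 : (j + 1) * m.choose (j + 1) = (m - j) * m.choose j := by
      rw [Nat.mul_comm, Nat.choose_succ_right_eq, Nat.mul_comm]
    rw [h1, ← Nat.add_mul, Nat.sub_add_cancel h]
  · rw [Nat.choose_eq_zero_of_lt h, Nat.choose_eq_zero_of_lt (by omega)]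
    ring

lemma pow_eq_sum (k : ℕ) (m : ℕ) :
    (m : ℚ) ^ k = ∑ j ∈ Finset.range (k + 1),
      (S2 k j : ℚ) * j.factorial * (m.choose j) := by
  induction k with
  | zero => simp [S2]
  | succ k ih =>
    have step : (m : ℚ) ^ (k + 1)
        = ∑ j ∈ Finset.range (k + 1),
            ((S2 k j : ℚ) * (j + 1).factorial * (m.choose (j + 1))
              + (j : ℚ) * (S2 k j) * j.factorial * (m.choose j)) := by
      rw [pow_succ, ih, Finset.sum_mul]
      refine Finset.sum_congr rfl fun j _ => ?_
      have hc : ((m * m.choose j : ℕ) : ℚ)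
          = ((j + 1) * m.choose (j + 1) + j * m.choose j : ℕ) := by
        rw [mul_choose_eq]
      push_cast at hc
      rw [Nat.factorial_succ]
      push_cast
      linear_combination (S2 k j : ℚ) * (j.factorial : ℚ) * hc
    rw [step, Finset.sum_add_distrib]
    -- RHS: peel off j = 0 and use the recurrence
    rw [Finset.sum_range_succ' (fun j => (S2 (k+1) j : ℚ) * j.factorial * (m.choose j)) (k+1)]
    have h0 : (S2 (k + 1) 0 : ℚ) * (Nat.factorial 0) * (m.choose 0) = 0 := by
      rw [S2_succ_zero]; simp
    rw [h0, add_zero]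
    have hrec : ∀ j ∈ Finset.range (k + 1),
        (S2 (k + 1) (j + 1) : ℚ) * (j + 1).factorial * (m.choose (j + 1))
          = (S2 k j : ℚ) * (j + 1).factorial * (m.choose (j + 1))
            + ((j : ℚ) + 1) * (S2 k (j + 1)) * (j + 1).factorial * (m.choose (j + 1)) := by
      intro j _
      show ((((j + 1) * S2 k (j + 1) + S2 k j : ℕ)) : ℚ) * _ * _ = _
      push_cast
      ring
    rw [Finset.sum_congr rfl hrec, Finset.sum_add_distrib]
    congr 1
    -- remaining: ∑ j in range (k+1), j * S2 k j * j! * C(m,j)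
    --          = ∑ j in range (k+1), (j+1) * S2 k (j+1) * (j+1)! * C(m,j+1)
    have e1 : ∑ j ∈ Finset.range (k + 2), (j : ℚ) * (S2 k j) * j.factorial * (m.choose j)
        = ∑ j ∈ Finset.range (k + 1), (j : ℚ) * (S2 k j) * j.factorial * (m.choose j) := by
      rw [Finset.sum_range_succ, S2_eq_zero_s16 k (k + 1) (by omega)]
      simp
    have e2 : ∑ j ∈ Finset.range (k + 2), (j : ℚ) * (S2 k j) * j.factorial * (m.choose j)
        = ∑ j ∈ Finset.range (k + 1),
            ((j : ℚ) + 1) * (S2 k (j + 1)) * (j + 1).factorial * (m.choose (j + 1)) := by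
      rw [Finset.sum_range_succ' (fun j => (j : ℚ) * (S2 k j) * j.factorial * (m.choose j)) (k+1)]
      push_cast
      simp
    rw [← e1, e2]

lemma key (m : ℕ) : ∀ i ≤ m,
    ∑ j ∈ Finset.Icc (i + 1) (m + 1),
        (-1 : ℚ) ^ j * j.factorial * S2 (m + 1) j / ((j : ℚ) - i)
      = (-1 : ℚ) ^ (i + 1) * (m + 1) * i.factorial * S2 m i := by
  induction m with
  | zero =>
    intro i hi
    interval_cases i
    rw [Finset.Icc_self, Finset.sum_singleton]
    norm_num [S2]
  | succ m ih =>
    intro i hi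
    -- split S2 (m+2) j using the recurrence
    have hsplit : ∑ j ∈ Finset.Icc (i + 1) (m + 2),
        (-1 : ℚ) ^ j * j.factorial * S2 (m + 2) j / ((j : ℚ) - i)
        = (∑ j ∈ Finset.Icc (i + 1) (m + 2),
            (-1 : ℚ) ^ j * j.factorial * ((j : ℚ) * S2 (m + 1) j) / ((j : ℚ) - i))
          + ∑ j ∈ Finset.Icc (i + 1) (m + 2),
            (-1 : ℚ) ^ j * j.factorial * (S2 (m + 1) (j - 1) : ℚ) / ((j : ℚ) - i) := by
      rw [← Finset.sum_add_distrib]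
      refine Finset.sum_congr rfl fun j hj => ?_
      simp only [Finset.mem_Icc] at hj
      obtain ⟨j', rfl⟩ : ∃ j', j = j' + 1 := ⟨j - 1, by omega⟩
      have : S2 (m + 2) (j' + 1) = (j' + 1) * S2 (m + 1) (j' + 1) + S2 (m + 1) j' := rfl
      rw [this]
      have h1 : (j' + 1) - 1 = j' := rfl
      rw [h1]
      push_cast
      ring
    rw [hsplit]
    -- part A : drop the top term
    have hA : ∑ j ∈ Finset.Icc (i + 1) (m + 2),
        (-1 : ℚ) ^ j * j.factorial * ((j : ℚ) * S2 (m + 1) j) / ((j : ℚ) - i)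
        = ∑ j ∈ Finset.Icc (i + 1) (m + 1),
            (-1 : ℚ) ^ j * j.factorial * ((j : ℚ) * S2 (m + 1) j) / ((j : ℚ) - i) := by
      rw [Finset.sum_Icc_succ_top (by omega : i + 1 ≤ m + 2)]
      rw [S2_eq_zero_s16 (m + 1) (m + 2) (by omega)]
      simp
    -- part B : shift the index down by one, then peel the bottom term
    have hB : ∑ j ∈ Finset.Icc (i + 1) (m + 2),
        (-1 : ℚ) ^ j * j.factorial * (S2 (m + 1) (j - 1) : ℚ) / ((j : ℚ) - i)
        = (-1 : ℚ) ^ (i + 1) * (i + 1).factorial * (S2 (m + 1) i : ℚ)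
          + ∑ j ∈ Finset.Icc (i + 1) (m + 1),
            (-1 : ℚ) ^ (j + 1) * (j + 1).factorial * (S2 (m + 1) j : ℚ) / ((j : ℚ) + 1 - i) := by
      have hmap : Finset.Icc (i + 1) (m + 2)
          = (Finset.Icc i (m + 1)).map (addRightEmbedding 1) := by
        rw [Finset.map_add_right_Icc]
      rw [hmap, Finset.sum_map]
      simp only [addRightEmbedding_apply]
      rw [Finset.Icc_eq_cons_Ioc (by omega : i ≤ m + 1), Finset.sum_cons, ← Finset.Icc_add_one_left_eq_Ioc]
      congr 1
      · have : ((i : ℚ) + 1) - i = 1 := by ring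
        push_cast
        rw [this]
        ring
      · refine Finset.sum_congr rfl fun j hj => ?_
        have h1 : (j + 1) - 1 = j := rfl
        rw [h1]
        push_cast
        ring
    rw [hA, hB]
    -- combine the two sums over Icc (i+1) (m+1)
    have hcomb : (∑ j ∈ Finset.Icc (i + 1) (m + 1),
        (-1 : ℚ) ^ j * j.factorial * ((j : ℚ) * S2 (m + 1) j) / ((j : ℚ) - i))
        + ((-1 : ℚ) ^ (i + 1) * (i + 1).factorial * (S2 (m + 1) i : ℚ)
          + ∑ j ∈ Finset.Icc (i + 1) (m + 1),
            (-1 : ℚ) ^ (j + 1) * (j + 1).factorial * (S2 (m + 1) j : ℚ) / ((j : ℚ) + 1 - i))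
        = (-1 : ℚ) ^ (i + 1) * (i + 1).factorial * (S2 (m + 1) i : ℚ)
          + ((i : ℚ) * ∑ j ∈ Finset.Icc (i + 1) (m + 1),
              (-1 : ℚ) ^ j * j.factorial * (S2 (m + 1) j : ℚ) / ((j : ℚ) - i)
            - (i : ℚ) * ∑ j ∈ Finset.Icc (i + 1) (m + 1),
              (-1 : ℚ) ^ j * j.factorial * (S2 (m + 1) j : ℚ) / ((j : ℚ) + 1 - i)) := by
      rw [Finset.mul_sum, Finset.mul_sum, ← Finset.sum_sub_distrib]
      rw [← add_assoc, add_comm (∑ j ∈ Finset.Icc (i+1) (m+1), _) _, add_assoc]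
      congr 1
      rw [← Finset.sum_add_distrib]
      refine Finset.sum_congr rfl fun j hj => ?_
      simp only [Finset.mem_Icc] at hj
      have ha : (j : ℚ) - i ≠ 0 := by
        have : (i : ℚ) < j := by exact_mod_cast (by omega : i < j)
        intro h; nlinarith
      have hb : (j : ℚ) + 1 - i ≠ 0 := by
        have : (i : ℚ) < j := by exact_mod_cast (by omega : i < j)
        intro h; nlinarith
      rw [Nat.factorial_succ]
      push_cast
      field_simp
      ring
    rw [hcomb]
    -- evaluate the first remaining sum (X)
    have hX : ∑ j ∈ Finset.Icc (i + 1) (m + 1),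
        (-1 : ℚ) ^ j * j.factorial * (S2 (m + 1) j : ℚ) / ((j : ℚ) - i)
        = (-1 : ℚ) ^ (i + 1) * (m + 1) * i.factorial * S2 m i := by
      rcases Nat.lt_or_ge i (m + 1) with h | h
      · exact ih i (by omega)
      · have hi' : i = m + 1 := by omega
        subst hi'
        rw [Finset.Icc_eq_empty (by omega), Finset.sum_empty,
          S2_eq_zero_s16 m (m + 1) (by omega)]
        push_cast
        ring
    rw [hX]
    -- now split on i
    rcases Nat.eq_zero_or_pos i with rfl | hipos
    · rw [S2_succ_zero]
      push_cast
      ring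
    · obtain ⟨i', rfl⟩ : ∃ i', i = i' + 1 := ⟨i - 1, by omega⟩
      -- evaluate the second remaining sum (Y) using ih at i'
      have hih := ih i' (by omega)
      rw [Finset.Icc_eq_cons_Ioc (by omega : i' + 1 ≤ m + 1), Finset.sum_cons,
        ← Finset.Icc_add_one_left_eq_Ioc] at hih
      have hY : ∑ j ∈ Finset.Icc (i' + 1 + 1) (m + 1),
          (-1 : ℚ) ^ j * j.factorial * (S2 (m + 1) j : ℚ) / ((j : ℚ) + 1 - (i' + 1 : ℕ))
          = (-1 : ℚ) ^ (i' + 1) * (m + 1) * i'.factorial * S2 m i'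
            - (-1 : ℚ) ^ (i' + 1) * (i' + 1).factorial * S2 (m + 1) (i' + 1) := by
        have hre : ∑ j ∈ Finset.Icc (i' + 1 + 1) (m + 1),
            (-1 : ℚ) ^ j * j.factorial * (S2 (m + 1) j : ℚ) / ((j : ℚ) + 1 - (i' + 1 : ℕ))
            = ∑ j ∈ Finset.Icc (Nat.succ (i' + 1)) (m + 1),
              (-1 : ℚ) ^ j * j.factorial * (S2 (m + 1) j : ℚ) / ((j : ℚ) - i') := by
          refine Finset.sum_congr rfl fun j hj => ?_
          have : ((j : ℚ) + 1 - ((i' : ℚ) + 1)) = (j : ℚ) - i' := by ring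
          push_cast
          rw [this]
        rw [hre, eq_sub_iff_add_eq, add_comm, ← hih]
        congr 1
        have : ((i' : ℚ) + 1) - i' = 1 := by ring
        push_cast
        rw [this]
        ring
      rw [hY]
      -- final algebra using the S2 recurrence
      have hrec : (S2 (m + 1) (i' + 1) : ℚ) = (i' + 1) * S2 m (i' + 1) + S2 m i' := by
        have : S2 (m + 1) (i' + 1) = (i' + 1) * S2 m (i' + 1) + S2 m i' := rfl
        exact_mod_cast congrArg (Nat.cast : ℕ → ℚ) this
      rw [Nat.factorial_succ, Nat.factorial_succ]
      push_cast [hrec]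
      ring

theorem powerSum_alt (k n : ℕ) (hk : 1 ≤ k) :
    ∑ m ∈ Finset.Icc 1 n, (m : ℚ) ^ k =
      (1 / ((k : ℚ) + 1)) *
        ∑ j ∈ Finset.Icc 1 (k + 1),
          (-1 : ℚ) ^ j * (j.factorial : ℚ) * (S2 (k + 1) j : ℚ) *
            ∑ i ∈ Finset.Icc 1 j, ((-1 : ℚ) ^ i / ((j : ℚ) + 1 - i)) * ((n + 1).choose i : ℚ) := by
  have hk1 : ((k : ℚ) + 1) ≠ 0 := by positivity
  set T : ℚ := ∑ j ∈ Finset.range (k + 1),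
      (S2 k j : ℚ) * j.factorial * ((n + 1).choose (j + 1)) with hT
  -- LHS = T
  have hL : ∑ m ∈ Finset.Icc 1 n, (m : ℚ) ^ k = T := by
    calc ∑ m ∈ Finset.Icc 1 n, (m : ℚ) ^ k
        = ∑ m ∈ Finset.Icc 1 n, ∑ j ∈ Finset.range (k + 1),
            (S2 k j : ℚ) * j.factorial * (m.choose j) :=
          Finset.sum_congr rfl fun m _ => pow_eq_sum k m
      _ = ∑ j ∈ Finset.range (k + 1), ∑ m ∈ Finset.Icc 1 n,
            (S2 k j : ℚ) * j.factorial * (m.choose j) := Finset.sum_comm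
      _ = T := by
          refine Finset.sum_congr rfl fun j hj => ?_
          rcases Nat.eq_zero_or_pos j with rfl | hjpos
          · obtain ⟨k', rfl⟩ : ∃ k', k = k' + 1 := ⟨k - 1, by omega⟩
            simp [S2_succ_zero]
          · rw [← Finset.mul_sum]
            congr 1
            have hsub : Finset.Icc j n ⊆ Finset.Icc 1 n :=
              Finset.Icc_subset_Icc hjpos le_rfl
            have hz : ∀ x ∈ Finset.Icc 1 n, x ∉ Finset.Icc j n →
                ((x.choose j : ℕ) : ℚ) = 0 := by
              intro x hx hnx
              simp only [Finset.mem_Icc] at hx hnx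
              rw [Nat.choose_eq_zero_of_lt (by omega)]
              simp
            rw [← Finset.sum_subset hsub hz, ← Nat.cast_sum, Nat.sum_Icc_choose]
  -- swap the double sum
  have hswap : ∑ j ∈ Finset.Icc 1 (k + 1),
        (-1 : ℚ) ^ j * (j.factorial : ℚ) * (S2 (k + 1) j : ℚ) *
          ∑ i ∈ Finset.Icc 1 j, ((-1 : ℚ) ^ i / ((j : ℚ) + 1 - i)) * ((n + 1).choose i : ℚ)
      = ∑ i ∈ Finset.Icc 1 (k + 1), ∑ j ∈ Finset.Icc i (k + 1),
          (-1 : ℚ) ^ j * (j.factorial : ℚ) * (S2 (k + 1) j : ℚ) *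
            (((-1 : ℚ) ^ i / ((j : ℚ) + 1 - i)) * ((n + 1).choose i : ℚ)) := by
    simp_rw [Finset.mul_sum]
    simp_rw [← Finset.Ico_add_one_right_eq_Icc]
    exact (Finset.sum_Ico_Ico_comm 1 (k + 2) _).symm
  -- evaluate each inner sum using `key`
  have hval : ∑ i ∈ Finset.Icc 1 (k + 1), ∑ j ∈ Finset.Icc i (k + 1),
          (-1 : ℚ) ^ j * (j.factorial : ℚ) * (S2 (k + 1) j : ℚ) *
            (((-1 : ℚ) ^ i / ((j : ℚ) + 1 - i)) * ((n + 1).choose i : ℚ))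
      = ∑ i ∈ Finset.Icc 1 (k + 1),
          ((k : ℚ) + 1) * ((S2 k (i - 1) : ℚ) * (i - 1).factorial * ((n + 1).choose i)) := by
    refine Finset.sum_congr rfl fun i hi => ?_
    simp only [Finset.mem_Icc] at hi
    obtain ⟨i', rfl⟩ : ∃ i', i = i' + 1 := ⟨i - 1, by omega⟩
    simp only [Nat.add_sub_cancel]
    have hstep : ∑ j ∈ Finset.Icc (i' + 1) (k + 1),
          (-1 : ℚ) ^ j * (j.factorial : ℚ) * (S2 (k + 1) j : ℚ) *
            (((-1 : ℚ) ^ (i' + 1) / ((j : ℚ) + 1 - ((i' + 1 : ℕ) : ℚ))) * ((n + 1).choose (i' + 1) : ℚ))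
        = ((-1 : ℚ) ^ (i' + 1) * ((n + 1).choose (i' + 1) : ℚ)) *
            ∑ j ∈ Finset.Icc (i' + 1) (k + 1),
              (-1 : ℚ) ^ j * (j.factorial : ℚ) * (S2 (k + 1) j : ℚ) / ((j : ℚ) - i') := by
      rw [Finset.mul_sum]
      refine Finset.sum_congr rfl fun j hj => ?_
      have hd : (j : ℚ) + 1 - ((i' + 1 : ℕ) : ℚ) = (j : ℚ) - i' := by push_cast; ring
      rw [hd]
      ring
    rw [hstep, key k i' (by omega)]
    have hsq : ((-1 : ℚ) ^ (i' + 1)) * ((-1 : ℚ) ^ (i' + 1)) = 1 := by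
      rw [← pow_add]
      exact Even.neg_one_pow ⟨i' + 1, by ring⟩
    linear_combination ((n + 1).choose (i' + 1) : ℚ) * ((k : ℚ) + 1) * (i'.factorial : ℚ) *
      (S2 k i' : ℚ) * hsq
  -- reindex to get (k+1) * T
  have hre : ∑ i ∈ Finset.Icc 1 (k + 1),
        ((k : ℚ) + 1) * ((S2 k (i - 1) : ℚ) * (i - 1).factorial * ((n + 1).choose i))
      = ((k : ℚ) + 1) * T := by
    rw [← Finset.mul_sum]
    congr 1
    rw [hT, Finset.range_eq_Ico, Finset.Ico_add_one_right_eq_Icc]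
    rw [show Finset.Icc 1 (k + 1) = (Finset.Icc 0 k).map (addRightEmbedding 1) from by
      rw [Finset.map_add_right_Icc]]
    rw [Finset.sum_map]
    refine Finset.sum_congr rfl fun j hj => ?_
    simp [addRightEmbedding_apply]
  rw [hL, hswap, hval, hre, one_div, inv_mul_cancel_left₀ hk1]
end
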